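/- The algebra Λ_{D,τ} is finite dimensional over k. A k-basis of Λ_{D,τ} is given by the images of: the n trivial paths at the vertices, the paths following the segments of length ℓ for each 1 ≤ ℓ ≤ 2n − 1 (one such path starting at each arrow i ∈ ZMod (2n), namely the path of consecutive arrows i, i+1, …, i+ℓ−1), and the n positive fundamental cycles γ⁺_e for e ∈ Fin n. -/

import Mathlib

open Quiver

/-- The type of arrows of a quiver, bundled with their endpoints. -/
abbrev QuiverArrow (V : Type) [Quiver.{0} V] : Type := Σ a b : V, a ⟶ b

/-- The defining relations of the path algebra of a quiver `V` over `k`, presented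
as a quotient of the free algebra on the vertices (idempotents) and the arrows. -/
inductive PathAlgRel (k : Type) [CommRing k] (V : Type) [Quiver.{0} V] [Fintype V] [DecidableEq V] :
    FreeAlgebra k (V ⊕ QuiverArrow V) → FreeAlgebra k (V ⊕ QuiverArrow V) → Prop
  | vertex (a b : V) :
      PathAlgRel k V (FreeAlgebra.ι k (Sum.inl a) * FreeAlgebra.ι k (Sum.inl b))
        (if a = b then FreeAlgebra.ι k (Sum.inl a) else 0)
  | unit : PathAlgRel k V (∑ a : V, FreeAlgebra.ι k (Sum.inl a)) 1
  | src (f : QuiverArrow V) (v : V) :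
      PathAlgRel k V (FreeAlgebra.ι k (Sum.inr f) * FreeAlgebra.ι k (Sum.inl v))
        (if v = f.1 then FreeAlgebra.ι k (Sum.inr f) else 0)
  | tgt (f : QuiverArrow V) (v : V) :
      PathAlgRel k V (FreeAlgebra.ι k (Sum.inl v) * FreeAlgebra.ι k (Sum.inr f))
        (if v = f.2.1 then FreeAlgebra.ι k (Sum.inr f) else 0)

/-- The path algebra `kQ` of a finite quiver. -/
abbrev PathAlg (k : Type) [CommRing k] (V : Type) [Quiver.{0} V] [Fintype V] [DecidableEq V] :
    Type := RingQuot (PathAlgRel k V)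

variable (k : Type) [CommRing k] (V : Type) [Quiver.{0} V] [Fintype V] [DecidableEq V]

/-- The idempotent of the path algebra corresponding to a vertex (trivial path). -/
def vertexElem (a : V) : PathAlg k V :=
  RingQuot.mkAlgHom k (PathAlgRel k V) (FreeAlgebra.ι k (Sum.inl a))

/-- The element of the path algebra corresponding to an arrow. -/
def arrowElem (f : QuiverArrow V) : PathAlg k V :=
  RingQuot.mkAlgHom k (PathAlgRel k V) (FreeAlgebra.ι k (Sum.inr f))

/-- The element of the path algebra corresponding to a path: the product of its arrows
(in composition order), with trivial paths mapping to the vertex idempotents. -/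
def pathElem : ∀ {a b : V}, Quiver.Path a b → PathAlg k V
  | a, _, Quiver.Path.nil => vertexElem k V a
  | _, _, Quiver.Path.cons p f => arrowElem k V ⟨_, _, f⟩ * pathElem p

/-- The two-sided ideal of the path algebra generated by the arrows. -/
def arrowIdeal : TwoSidedIdeal (PathAlg k V) :=
  TwoSidedIdeal.span (Set.range (arrowElem k V))

open Quiver

/-- The Gauss data of an oriented knot diagram with `n` crossings: traversing the knot,
one passes through `2 * n` crossing-points, indexed by `ZMod (2 * n)`; `c i` is the
crossing visited at position `i`, and `over e`, `under e` are the positions at which the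
crossing `e` is visited over- resp. under-crossing. -/
structure GaussData (n : ℕ) where
  c : ZMod (2 * n) → Fin n
  over' : Fin n → ZMod (2 * n)
  under : Fin n → ZMod (2 * n)
  bij : Function.Bijective (Sum.elim over' under : Fin n ⊕ Fin n → ZMod (2 * n))
  c_over : ∀ e, c (over' e) = e
  c_under : ∀ e, c (under e) = e

variable {n : ℕ}

/-- The vertices of the quiver `Q_D` of the diagram: the crossings `Fin n`
(wrapped in a structure so that the quiver structure can depend on `D`). -/
@[ext] structure DiagVertex (D : GaussData n) where
  val : Fin n
  deriving DecidableEq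

instance (D : GaussData n) : Fintype (DiagVertex D) :=
  Fintype.ofEquiv (Fin n) ⟨DiagVertex.mk, DiagVertex.val, fun _ => rfl, fun _ => rfl⟩

/-- The quiver `Q_D` of the diagram: vertices are the crossings, arrows are the segments,
indexed by `ZMod (2 * n)`; the arrow `i` has source `c i` and target `c (i + 1)`. -/
instance diagQuiver (D : GaussData n) : Quiver.{0} (DiagVertex D) :=
  ⟨fun a b => { i : ZMod (2 * n) // D.c i = a.val ∧ D.c (i + 1) = b.val }⟩

namespace GaussData

variable (D : GaussData n)

/-- The path following the segments `i, i + 1, …, i + ℓ - 1`. -/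
def segPath (i : ZMod (2 * n)) : ∀ ℓ : ℕ, Quiver.Path (⟨D.c i⟩ : DiagVertex D) ⟨D.c (i + ℓ)⟩
  | 0 => Quiver.Path.nil.cast rfl (congrArg (fun z => (⟨D.c z⟩ : DiagVertex D)) (by push_cast; ring))
  | ℓ + 1 =>
      (Quiver.Path.cons (segPath i ℓ)
        (⟨i + ℓ, rfl, rfl⟩ : (⟨D.c (i + ℓ)⟩ : DiagVertex D) ⟶ ⟨D.c (i + ℓ + 1)⟩)).cast rfl
        (congrArg (fun z => (⟨D.c z⟩ : DiagVertex D)) (by push_cast; ring))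

/-- The length of the path `α_e` : the unique representative in `{1, …, 2n}` of
`under e - over e` in `ZMod (2 * n)`. -/
def len₁ (e : Fin n) : ℕ :=
  if (D.under e - D.over' e).val = 0 then 2 * n else (D.under e - D.over' e).val

/-- The length of the path `β_e` : the unique representative in `{1, …, 2n}` of
`over e - under e` in `ZMod (2 * n)`. -/
def len₂ (e : Fin n) : ℕ :=
  if (D.over' e - D.under e).val = 0 then 2 * n else (D.over' e - D.under e).val

lemma coe_len₁ [NeZero n] (e : Fin n) :
    ((D.len₁ e : ℕ) : ZMod (2 * n)) = D.under e - D.over' e := by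
  haveI : NeZero (2 * n) := ⟨by have := NeZero.ne n; omega⟩
  rw [len₁]
  split_ifs with h
  · rw [ZMod.natCast_self]
    exact ((ZMod.val_eq_zero _).mp h).symm
  · exact ZMod.natCast_rightInverse _

lemma coe_len₂ [NeZero n] (e : Fin n) :
    ((D.len₂ e : ℕ) : ZMod (2 * n)) = D.over' e - D.under e := by
  haveI : NeZero (2 * n) := ⟨by have := NeZero.ne n; omega⟩
  rw [len₂]
  split_ifs with h
  · rw [ZMod.natCast_self]
    exact ((ZMod.val_eq_zero _).mp h).symm
  · exact ZMod.natCast_rightInverse _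

/-- The path `α_e`, from the over-point of `e` to its under-point. -/
def alphaPath [NeZero n] (e : Fin n) : Quiver.Path (⟨e⟩ : DiagVertex D) ⟨e⟩ :=
  (D.segPath (D.over' e) (D.len₁ e)).cast
    (congrArg DiagVertex.mk (D.c_over e))
    (congrArg (fun z => (⟨D.c z⟩ : DiagVertex D)) (by rw [D.coe_len₁]; ring) |>.trans
      (congrArg DiagVertex.mk (D.c_under e)))

/-- The path `β_e`, from the under-point of `e` to its over-point. -/
def betaPath [NeZero n] (e : Fin n) : Quiver.Path (⟨e⟩ : DiagVertex D) ⟨e⟩ :=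
  (D.segPath (D.under e) (D.len₂ e)).cast
    (congrArg DiagVertex.mk (D.c_under e))
    (congrArg (fun z => (⟨D.c z⟩ : DiagVertex D)) (by rw [D.coe_len₂]; ring) |>.trans
      (congrArg DiagVertex.mk (D.c_over e)))

/-- The positive (over-crossing) fundamental cycle `γ⁺_e = β_e α_e`
(first `α_e`, then `β_e`). -/
def gammaPlus [NeZero n] (e : Fin n) : Quiver.Path (⟨e⟩ : DiagVertex D) ⟨e⟩ :=
  (D.alphaPath e).comp (D.betaPath e)

/-- The negative (under-crossing) fundamental cycle `γ⁻_e = α_e β_e`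
(first `β_e`, then `α_e`). -/
def gammaMinus [NeZero n] (e : Fin n) : Quiver.Path (⟨e⟩ : DiagVertex D) ⟨e⟩ :=
  (D.betaPath e).comp (D.alphaPath e)

end GaussData

variable {n : ℕ}

/-- The element of the path algebra `kQ_D` given by the arrow (segment) `i`. -/
def arrowGen (k : Type) [CommRing k] (D : GaussData n) (i : ZMod (2 * n)) :
    PathAlg k (DiagVertex D) :=
  arrowElem k (DiagVertex D) ⟨⟨D.c i⟩, ⟨D.c (i + 1)⟩, ⟨i, rfl, rfl⟩⟩

/-- The two-sided ideal `I_τ` of `kQ_D`, generated by the Type I relations (composable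
length-2 paths `b ∘ a` with `b ≠ a + 1`) and the Type II relations
`α_e β_e - τ(e) β_e α_e`. -/
def knotIdeal (k : Type) [CommRing k] [NeZero n] (D : GaussData n) (τ : Fin n → kˣ) :
    TwoSidedIdeal (PathAlg k (DiagVertex D)) :=
  TwoSidedIdeal.span
    ({x | ∃ i j : ZMod (2 * n), D.c (i + 1) = D.c j ∧ j ≠ i + 1 ∧
        x = arrowGen k D j * arrowGen k D i} ∪
     {x | ∃ e : Fin n, x = pathElem k (DiagVertex D) (D.gammaMinus e) -
        (τ e : k) • pathElem k (DiagVertex D) (D.gammaPlus e)})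

/-- The defining relations of the algebra `Λ_{D,τ}` of the diagram, as a quotient of the
path algebra `kQ_D`. -/
inductive KnotRel (k : Type) [CommRing k] [NeZero n] (D : GaussData n) (τ : Fin n → kˣ) :
    PathAlg k (DiagVertex D) → PathAlg k (DiagVertex D) → Prop
  | typeI (i j : ZMod (2 * n)) (hcomp : D.c (i + 1) = D.c j) (hne : j ≠ i + 1) :
      KnotRel k D τ (arrowGen k D j * arrowGen k D i) 0
  | typeII (e : Fin n) :
      KnotRel k D τ (pathElem k (DiagVertex D) (D.gammaMinus e))
        ((τ e : k) • pathElem k (DiagVertex D) (D.gammaPlus e))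

/-- The algebra `Λ_{D,τ} = kQ_D / I_τ` of the diagram `D` with respect to `τ`. -/
abbrev KnotAlg (k : Type) [CommRing k] [NeZero n] (D : GaussData n) (τ : Fin n → kˣ) : Type :=
  RingQuot (KnotRel k D τ)

/-- The elements of `Λ_{D,τ}` claimed to form a basis: the trivial paths, the
segment-following paths of length `1 ≤ ℓ ≤ 2n - 1`, and the positive fundamental cycles. -/
def knotBasisFamily (k : Type) [CommRing k] [NeZero n] (D : GaussData n) (τ : Fin n → kˣ) :
    Fin n ⊕ (ZMod (2 * n) × Fin (2 * n - 1)) ⊕ Fin n → KnotAlg k D τ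
  | .inl e => RingQuot.mkAlgHom k (KnotRel k D τ) (vertexElem k (DiagVertex D) ⟨e⟩)
  | .inr (.inl (i, j)) =>
      RingQuot.mkAlgHom k (KnotRel k D τ) (pathElem k (DiagVertex D) (D.segPath i (j.val + 1)))
  | .inr (.inr e) =>
      RingQuot.mkAlgHom k (KnotRel k D τ) (pathElem k (DiagVertex D) (D.gammaPlus e))

/-- The defining relations of the monomial algebra `Ξ_D` of the diagram: the Type I
relations, together with all paths of length `2n + 1` (Type II'). -/
inductive MonRel (k : Type) [CommRing k] [NeZero n] (D : GaussData n) :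
    PathAlg k (DiagVertex D) → PathAlg k (DiagVertex D) → Prop
  | typeI (i j : ZMod (2 * n)) (hcomp : D.c (i + 1) = D.c j) (hne : j ≠ i + 1) :
      MonRel k D (arrowGen k D j * arrowGen k D i) 0
  | typeII' (a b : DiagVertex D) (p : Quiver.Path a b) (hp : p.length = 2 * n + 1) :
      MonRel k D (pathElem k (DiagVertex D) p) 0

/-- The monomial algebra `Ξ_D = kQ_D / J_D` of the diagram `D`. -/
abbrev MonAlg (k : Type) [CommRing k] [NeZero n] (D : GaussData n) : Type :=
  RingQuot (MonRel k D)

/-- The elements of `Ξ_D` claimed to form a basis: the trivial paths and the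
segment-following paths of length `1 ≤ ℓ ≤ 2n`. -/
def monBasisFamily (k : Type) [CommRing k] [NeZero n] (D : GaussData n) :
    Fin n ⊕ (ZMod (2 * n) × Fin (2 * n)) → MonAlg k D
  | .inl e => RingQuot.mkAlgHom k (MonRel k D) (vertexElem k (DiagVertex D) ⟨e⟩)
  | .inr (i, j) =>
      RingQuot.mkAlgHom k (MonRel k D) (pathElem k (DiagVertex D) (D.segPath i (j.val + 1)))

/-!
Modulo the Type I relations a nonzero path of `Q_D` follows the segments. By the Type II
relation, the segment path of length `2n` from one point of a crossing `e` is a unit multiple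
of the one from its other point; the arrow following the former cannot follow the latter, so
segment paths of length `2n + 1` vanish. Hence the span of the segment paths of length at most
`2n` (the claimed family, with `γ⁺_e` the one from `over e`) contains `1` and is stable under
left multiplication by vertices and arrows, so it is everything.

For independence, `Λ_{D,τ}` acts on the free module on the claimed index set: the segment path
of length `L` from `i` is sent to its own basis vector (a multiple of `γ⁺` when `L = 2n`, and
`0` beyond). Once the relations of `kQ_D` and of `I_τ` are checked on basis vectors, evaluation
at the sum of the vertex vectors maps the family onto the standard basis.
-/

section PathAlgebra

lemma pathElem_cast {a b a' b' : V} (ha : a = a') (hb : b = b') (p : Quiver.Path a b) :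
    pathElem k V (p.cast ha hb) = pathElem k V p := by
  subst ha hb
  rw [Quiver.Path.cast_rfl_rfl]

lemma vertexElem_mul_vertexElem (a b : V) :
    vertexElem k V a * vertexElem k V b = if a = b then vertexElem k V a else 0 := by
  simpa [vertexElem, apply_ite] using RingQuot.mkAlgHom_rel k (PathAlgRel.vertex (k := k) a b)

lemma arrowElem_mul_vertexElem (f : QuiverArrow V) (v : V) :
    arrowElem k V f * vertexElem k V v = if v = f.1 then arrowElem k V f else 0 := by
  simpa [vertexElem, arrowElem, apply_ite] using
    RingQuot.mkAlgHom_rel k (PathAlgRel.src (k := k) f v)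

lemma arrowElem_mul_vertexElem_self (f : QuiverArrow V) :
    arrowElem k V f * vertexElem k V f.1 = arrowElem k V f := by
  rw [arrowElem_mul_vertexElem, if_pos rfl]

lemma vertexElem_mul_arrowElem (f : QuiverArrow V) (v : V) :
    vertexElem k V v * arrowElem k V f = if v = f.2.1 then arrowElem k V f else 0 := by
  simpa [vertexElem, arrowElem, apply_ite] using
    RingQuot.mkAlgHom_rel k (PathAlgRel.tgt (k := k) f v)

lemma sum_vertexElem : ∑ a : V, vertexElem k V a = 1 := by
  simpa [vertexElem] using RingQuot.mkAlgHom_rel k (PathAlgRel.unit (k := k) (V := V))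

lemma vertexElem_mul_pathElem {a b : V} (v : V) (p : Quiver.Path a b) :
    vertexElem k V v * pathElem k V p = if v = b then pathElem k V p else 0 := by
  cases p with
  | nil =>
      rw [pathElem, vertexElem_mul_vertexElem]
      split_ifs with h <;> simp [h]
  | cons p f =>
      rw [pathElem, ← mul_assoc, vertexElem_mul_arrowElem]
      split_ifs <;> simp

lemma arrowElem_mul_pathElem_of_ne (f : QuiverArrow V) {a b : V} (p : Quiver.Path a b)
    (h : f.1 ≠ b) : arrowElem k V f * pathElem k V p = 0 := by
  rw [← arrowElem_mul_vertexElem_self, mul_assoc, vertexElem_mul_pathElem, if_neg h, mul_zero]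

lemma pathElem_comp {a b c : V} (p : Quiver.Path a b) (q : Quiver.Path b c) :
    pathElem k V (p.comp q) = pathElem k V q * pathElem k V p := by
  induction q with
  | nil => rw [Quiver.Path.comp_nil, pathElem, vertexElem_mul_pathElem, if_pos rfl]
  | cons q f ih => rw [Quiver.Path.comp_cons, pathElem, pathElem, ih, mul_assoc]

end PathAlgebra

namespace GaussData

variable {k} (D : GaussData n)

lemma over_ne_under (e f : Fin n) : D.over' e ≠ D.under f := fun h => by
  simpa using D.bij.injective (a₁ := .inl e) (a₂ := .inr f) h

lemma over_or_under (i : ZMod (2 * n)) : D.over' (D.c i) = i ∨ D.under (D.c i) = i := by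
  obtain ⟨e | e, rfl⟩ := D.bij.surjective i
  · exact .inl (by simp [D.c_over])
  · exact .inr (by simp [D.c_under])

lemma len₁_add_len₂ [NeZero n] (e : Fin n) : D.len₁ e + D.len₂ e = 2 * n := by
  have hne : D.under e - D.over' e ≠ 0 := sub_ne_zero.mpr (D.over_ne_under e e).symm
  have hval : (D.under e - D.over' e).val ≠ 0 := by rwa [Ne, ZMod.val_eq_zero]
  have hneg : (D.over' e - D.under e).val = 2 * n - (D.under e - D.over' e).val := by
    rw [← neg_sub, ZMod.neg_val, if_neg hne]
  have hlt := ZMod.val_lt (D.under e - D.over' e)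
  simp only [len₁, len₂, if_neg hval, hneg]
  split_ifs <;> omega

lemma pathElem_segPath_zero (i : ZMod (2 * n)) :
    pathElem k (DiagVertex D) (D.segPath i 0) = vertexElem k (DiagVertex D) ⟨D.c i⟩ := by
  rw [segPath, pathElem_cast, pathElem]

lemma pathElem_segPath_succ (i : ZMod (2 * n)) (L : ℕ) :
    pathElem k (DiagVertex D) (D.segPath i (L + 1)) =
      arrowGen k D (i + L) * pathElem k (DiagVertex D) (D.segPath i L) := by
  rw [segPath, pathElem_cast, pathElem]
  rfl

lemma pathElem_segPath_one (i : ZMod (2 * n)) :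
    pathElem k (DiagVertex D) (D.segPath i 1) = arrowGen k D i := by
  rw [← zero_add 1, pathElem_segPath_succ, pathElem_segPath_zero, Nat.cast_zero, add_zero,
    arrowGen, arrowElem_mul_vertexElem_self]

lemma pathElem_segPath_add (i : ZMod (2 * n)) (L L' : ℕ) :
    pathElem k (DiagVertex D) (D.segPath (i + L) L') *
        pathElem k (DiagVertex D) (D.segPath i L) =
      pathElem k (DiagVertex D) (D.segPath i (L + L')) := by
  induction L' with
  | zero => rw [pathElem_segPath_zero, vertexElem_mul_pathElem, if_pos rfl, add_zero]
  | succ L' ih =>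
      rw [pathElem_segPath_succ, mul_assoc, ih, ← add_assoc, pathElem_segPath_succ]
      push_cast
      ring_nf

lemma pathElem_gammaPlus [NeZero n] (e : Fin n) :
    pathElem k (DiagVertex D) (D.gammaPlus e) =
      pathElem k (DiagVertex D) (D.segPath (D.over' e) (2 * n)) := by
  have hu : D.under e = D.over' e + (D.len₁ e : ℕ) := by rw [D.coe_len₁]; ring
  rw [gammaPlus, pathElem_comp, betaPath, alphaPath, pathElem_cast, pathElem_cast, hu,
    pathElem_segPath_add, len₁_add_len₂]

lemma pathElem_gammaMinus [NeZero n] (e : Fin n) :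
    pathElem k (DiagVertex D) (D.gammaMinus e) =
      pathElem k (DiagVertex D) (D.segPath (D.under e) (2 * n)) := by
  have ho : D.over' e = D.under e + (D.len₂ e : ℕ) := by rw [D.coe_len₂]; ring
  have hlen : D.len₂ e + D.len₁ e = 2 * n := by rw [add_comm, len₁_add_len₂]
  rw [gammaMinus, pathElem_comp, betaPath, alphaPath, pathElem_cast, pathElem_cast, ho,
    pathElem_segPath_add, hlen]

end GaussData

lemma arrowElem_eq_arrowGen (D : GaussData n) (f : QuiverArrow (DiagVertex D)) :
    arrowElem k (DiagVertex D) f = arrowGen k D f.2.2.1 := by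
  obtain ⟨⟨a⟩, ⟨b⟩, i, ha, hb⟩ := f
  dsimp only at ha hb
  subst ha hb
  rfl

abbrev KnotBasisIdx (n : ℕ) : Type := Fin n ⊕ (ZMod (2 * n) × Fin (2 * n - 1)) ⊕ Fin n

/-- Every basis element is the class of a segment path; `basisStart` and `basisLength` are
its first arrow and its length (the cycle `γ⁺_e` starts at `over e`). -/
def basisStart (D : GaussData n) : KnotBasisIdx n → ZMod (2 * n)
  | .inl e => D.over' e
  | .inr (.inl (i, _)) => i
  | .inr (.inr e) => D.over' e

def basisLength : KnotBasisIdx n → ℕ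
  | .inl _ => 0
  | .inr (.inl (_, l)) => l.val + 1
  | .inr (.inr _) => 2 * n

lemma basisLength_le (b : KnotBasisIdx n) : basisLength b ≤ 2 * n := by
  rcases b with _ | ⟨_, l⟩ | _ <;> simp only [basisLength] <;> omega

namespace KnotAlg

variable (D : GaussData n) (τ : Fin n → kˣ)

section

variable [NeZero n]

local notation "π" => RingQuot.mkAlgHom k (KnotRel k D τ)

local notation "W" => Submodule.span k (Set.range (knotBasisFamily k D τ))

def segElem (i : ZMod (2 * n)) (L : ℕ) : KnotAlg k D τ :=
  π (pathElem k (DiagVertex D) (D.segPath i L))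

lemma segElem_zero (i : ZMod (2 * n)) :
    segElem k D τ i 0 = π (vertexElem k (DiagVertex D) ⟨D.c i⟩) := by
  rw [segElem, D.pathElem_segPath_zero]

lemma segElem_succ (i : ZMod (2 * n)) (L : ℕ) :
    segElem k D τ i (L + 1) = π (arrowGen k D (i + L)) * segElem k D τ i L := by
  rw [segElem, D.pathElem_segPath_succ, map_mul, segElem]

lemma segElem_one (i : ZMod (2 * n)) : segElem k D τ i 1 = π (arrowGen k D i) := by
  rw [segElem, D.pathElem_segPath_one]

lemma segElem_under_two_mul (e : Fin n) :
    segElem k D τ (D.under e) (2 * n) = (τ e : k) • segElem k D τ (D.over' e) (2 * n) := by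
  simpa only [segElem, map_smul, D.pathElem_gammaMinus, D.pathElem_gammaPlus] using
    RingQuot.mkAlgHom_rel k (KnotRel.typeII (k := k) (D := D) (τ := τ) e)

lemma arrowGen_mul_segElem_of_ne (i j : ZMod (2 * n)) {L : ℕ} (hL : 1 ≤ L) (h : i ≠ j + L) :
    π (arrowGen k D i) * segElem k D τ j L = 0 := by
  by_cases hc : D.c (j + L) = D.c i
  · obtain ⟨L, rfl⟩ := Nat.exists_eq_add_of_le' hL
    rw [Nat.cast_succ, ← add_assoc] at h hc
    rw [segElem_succ, ← mul_assoc, ← map_mul,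
      RingQuot.mkAlgHom_rel k (KnotRel.typeI (k := k) (τ := τ) _ _ hc h), map_zero, zero_mul]
  · rw [segElem, ← map_mul, arrowGen, arrowElem_mul_pathElem_of_ne, map_zero]
    exact fun h' => hc (congrArg DiagVertex.val h').symm

lemma exists_segElem_two_mul_eq_smul (j : ZMod (2 * n)) :
    ∃ j' ≠ j, ∃ r : k, segElem k D τ j (2 * n) = r • segElem k D τ j' (2 * n) := by
  rcases D.over_or_under j with h | h
  · refine ⟨D.under (D.c j), fun h' => D.over_ne_under _ _ (h.trans h'.symm),
      ((τ (D.c j))⁻¹ : kˣ), ?_⟩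
    rw [segElem_under_two_mul, smul_smul, Units.inv_mul, one_smul, h]
  · refine ⟨D.over' (D.c j), fun h' => D.over_ne_under _ _ (h'.trans h.symm), τ (D.c j), ?_⟩
    rw [← segElem_under_two_mul, h]

lemma segElem_two_mul_add_one (j : ZMod (2 * n)) : segElem k D τ j (2 * n + 1) = 0 := by
  obtain ⟨j', hne, r, hr⟩ := exists_segElem_two_mul_eq_smul k D τ j
  have h2n : 1 ≤ 2 * n := by have := NeZero.ne n; omega
  rw [segElem_succ, ZMod.natCast_self, add_zero, hr, mul_smul_comm,
    arrowGen_mul_segElem_of_ne k D τ j j' h2n (by simpa using hne.symm), smul_zero]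

lemma knotBasisFamily_eq_segElem (b : KnotBasisIdx n) :
    knotBasisFamily k D τ b = segElem k D τ (basisStart D b) (basisLength b) := by
  rcases b with e | ⟨i, l⟩ | e
  · rw [basisStart, basisLength, segElem_zero, D.c_over]
    rfl
  · rfl
  · rw [knotBasisFamily, basisStart, basisLength, segElem, D.pathElem_gammaPlus]

lemma segElem_mem_span (j : ZMod (2 * n)) {L : ℕ} (hL : L ≤ 2 * n) :
    segElem k D τ j L ∈ W := by
  have mem (b) : knotBasisFamily k D τ b ∈ W :=
    Submodule.subset_span ⟨b, rfl⟩
  rcases Nat.lt_or_ge L (2 * n) with hlt | hge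
  · rcases L with _ | l
    · simpa [knotBasisFamily_eq_segElem, basisStart, basisLength, segElem_zero, D.c_over] using
        mem (.inl (D.c j))
    · simpa [knotBasisFamily_eq_segElem, basisStart, basisLength] using
        mem (.inr (.inl (j, ⟨l, by omega⟩)))
  · obtain rfl : L = 2 * n := le_antisymm hL hge
    rcases D.over_or_under j with h | h
    · simpa [knotBasisFamily_eq_segElem, basisStart, basisLength, h] using
        mem (.inr (.inr (D.c j)))
    · rw [← h, segElem_under_two_mul]
      refine Submodule.smul_mem _ _ ?_
      simpa [knotBasisFamily_eq_segElem, basisStart, basisLength] using mem (.inr (.inr (D.c j)))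

lemma vertexElem_mul_segElem_mem_span (v : DiagVertex D) (j : ZMod (2 * n)) {L : ℕ}
    (hL : L ≤ 2 * n) : π (vertexElem k (DiagVertex D) v) * segElem k D τ j L ∈ W := by
  rw [segElem, ← map_mul, vertexElem_mul_pathElem, apply_ite π, map_zero]
  split_ifs
  · exact segElem_mem_span k D τ j hL
  · exact zero_mem _

lemma arrowGen_mul_segElem_mem_span (i j : ZMod (2 * n)) {L : ℕ} (hL : L ≤ 2 * n) :
    π (arrowGen k D i) * segElem k D τ j L ∈ W := by
  have h2n : 1 ≤ 2 * n := by have := NeZero.ne n; omega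
  rcases L with _ | L
  · rw [segElem_zero, ← map_mul, arrowGen, arrowElem_mul_vertexElem, apply_ite π, map_zero]
    split_ifs
    · exact segElem_one k D τ i ▸ segElem_mem_span k D τ i h2n
    · exact zero_mem _
  by_cases hi : i = j + ((L + 1 : ℕ) : ZMod (2 * n))
  · rw [hi, ← segElem_succ]
    rcases Nat.lt_or_ge (L + 1) (2 * n) with hlt | hge
    · exact segElem_mem_span k D τ j hlt
    · rw [show L + 1 = 2 * n by omega, segElem_two_mul_add_one]
      exact zero_mem _
  · rw [arrowGen_mul_segElem_of_ne k D τ i j (Nat.le_add_left 1 L) hi]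
    exact zero_mem _

lemma one_mem_span : (1 : KnotAlg k D τ) ∈ W := by
  rw [← map_one π, ← sum_vertexElem, map_sum]
  refine Submodule.sum_mem _ fun v _ => Submodule.subset_span ⟨.inl v.val, rfl⟩

lemma mul_mem_span_of_mem (x : PathAlg k (DiagVertex D)) {w : KnotAlg k D τ} (hw : w ∈ W) :
    π x * w ∈ W := by
  obtain ⟨x, rfl⟩ := RingQuot.mkAlgHom_surjective k (PathAlgRel k (DiagVertex D)) x
  induction x using FreeAlgebra.induction generalizing w with
  | grade0 r => simpa [Algebra.algebraMap_eq_smul_one] using Submodule.smul_mem _ r hw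
  | grade1 x =>
      induction hw using Submodule.span_induction with
      | mem w hw =>
          obtain ⟨b, rfl⟩ := hw
          rw [knotBasisFamily_eq_segElem]
          rcases x with v | f
          · exact vertexElem_mul_segElem_mem_span k D τ v _ (basisLength_le b)
          · rw [show RingQuot.mkAlgHom k _ (FreeAlgebra.ι k (.inr f)) = arrowGen k D f.2.2.1 from
              arrowElem_eq_arrowGen k D f]
            exact arrowGen_mul_segElem_mem_span k D τ f.2.2.1 _ (basisLength_le b)
      | zero => simp
      | add w w' _ _ hw hw' => rw [mul_add]; exact add_mem hw hw'
      | smul r w _ hw => rw [mul_smul_comm]; exact Submodule.smul_mem _ r hw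
  | mul x y hx hy => rw [map_mul, map_mul, mul_assoc]; exact hx (hy hw)
  | add x y hx hy => rw [map_add, map_add, add_mul]; exact add_mem (hx hw) (hy hw)

lemma span_knotBasisFamily_eq_top : W = ⊤ := by
  refine eq_top_iff.mpr fun y _ => ?_
  obtain ⟨x, rfl⟩ := RingQuot.mkAlgHom_surjective k (KnotRel k D τ) y
  simpa using mul_mem_span_of_mem k D τ x (one_mem_span k D τ)

end

def cycleCoeff (i : ZMod (2 * n)) : k := if D.over' (D.c i) = i then 1 else (τ (D.c i) : k)

/-- The image of the segment path of length `L` starting at `i` in the model module: the basis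
vectors up to length `2n - 1`, a multiple of `γ⁺` at length `2n` (the Type II relation turns
`γ⁻_e` into `τ e • γ⁺_e`), and `0` beyond. -/
noncomputable def segVec (i : ZMod (2 * n)) : ℕ → KnotBasisIdx n →₀ k
  | 0 => Finsupp.single (.inl (D.c i)) 1
  | L + 1 =>
      if h : L < 2 * n - 1 then Finsupp.single (.inr (.inl (i, ⟨L, h⟩))) 1
      else if L + 1 = 2 * n then cycleCoeff k D τ i • Finsupp.single (.inr (.inr (D.c i))) 1
      else 0

lemma segVec_of_two_mul_lt (i : ZMod (2 * n)) {L : ℕ} (h : 2 * n < L) :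
    segVec k D τ i L = 0 := by
  obtain ⟨L, rfl⟩ := Nat.exists_eq_add_of_lt (Nat.zero_lt_of_lt h)
  rw [zero_add, segVec, dif_neg (by omega), if_neg (by omega)]

variable [NeZero n]

lemma segVec_two_mul (i : ZMod (2 * n)) :
    segVec k D τ i (2 * n) = cycleCoeff k D τ i • Finsupp.single (.inr (.inr (D.c i))) 1 := by
  have h : 2 * n - 1 + 1 = 2 * n := Nat.sub_add_cancel (by have := NeZero.ne n; omega)
  simpa only [h] using show segVec k D τ i (2 * n - 1 + 1) = _ by
    rw [segVec, dif_neg (by omega), if_pos h]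

lemma segVec_under_two_mul (e : Fin n) :
    segVec k D τ (D.under e) (2 * n) = (τ e : k) • segVec k D τ (D.over' e) (2 * n) := by
  simp [segVec_two_mul, cycleCoeff, D.c_over, D.c_under, D.over_ne_under]

lemma single_eq_segVec (b : KnotBasisIdx n) :
    Finsupp.single b 1 = segVec k D τ (basisStart D b) (basisLength b) := by
  rcases b with e | ⟨i, l⟩ | e
  · simp [segVec, basisStart, basisLength, D.c_over]
  · simp [segVec, basisStart, basisLength]
  · simp [segVec_two_mul, cycleCoeff, basisStart, basisLength, D.c_over]

lemma linearCombination_segVec {N : Type*} [AddCommMonoid N] [Module k N]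
    (F : ZMod (2 * n) → ℕ → N) (h0 : ∀ j, F (D.over' (D.c j)) 0 = F j 0)
    (h2n : ∀ j, F j (2 * n) = cycleCoeff k D τ j • F (D.over' (D.c j)) (2 * n))
    (hlt : ∀ j L, 2 * n < L → F j L = 0) (j : ZMod (2 * n)) (L : ℕ) :
    Finsupp.linearCombination k (fun b => F (basisStart D b) (basisLength b)) (segVec k D τ j L) =
      F j L := by
  rcases lt_trichotomy L (2 * n) with hL | rfl | hL
  · rcases L with _ | L
    · rw [← h0]
      simp [segVec, basisStart, basisLength]
    · simp [segVec, dif_pos (show L < 2 * n - 1 by omega), basisStart, basisLength]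
  · rw [segVec_two_mul, map_smul, Finsupp.linearCombination_single, one_smul, h2n]
    rfl
  · simp [segVec_of_two_mul_lt k D τ j hL, hlt j L hL]

/-- For `1 ≤ L`, the image in the model module of the segment path `(i, L)` composed after the
segment path `(j, m)`. -/
noncomputable def segMul (i : ZMod (2 * n)) (L : ℕ) (j : ZMod (2 * n)) (m : ℕ) :
    KnotBasisIdx n →₀ k :=
  if m = 0 then (if D.c j = D.c i then segVec k D τ i L else 0)
  else if i = j + m then segVec k D τ j (m + L) else 0

noncomputable def vertexAct (v : DiagVertex D) : Module.End k (KnotBasisIdx n →₀ k) :=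
  Finsupp.linearCombination k fun b =>
    if v = ⟨D.c (basisStart D b + basisLength b)⟩ then
      segVec k D τ (basisStart D b) (basisLength b) else 0

noncomputable def arrowAct (i : ZMod (2 * n)) : Module.End k (KnotBasisIdx n →₀ k) :=
  Finsupp.linearCombination k fun b => segMul k D τ i 1 (basisStart D b) (basisLength b)

lemma ext_segVec {f g : Module.End k (KnotBasisIdx n →₀ k)}
    (h : ∀ j L, f (segVec k D τ j L) = g (segVec k D τ j L)) : f = g :=
  Finsupp.basisSingleOne.ext fun b => by
    simpa only [Finsupp.coe_basisSingleOne, single_eq_segVec k D τ] using h _ _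

lemma vertexAct_segVec (v : DiagVertex D) (j : ZMod (2 * n)) (L : ℕ) :
    vertexAct k D τ v (segVec k D τ j L) =
      if v = ⟨D.c (j + L)⟩ then segVec k D τ j L else 0 := by
  refine linearCombination_segVec k D τ
    (fun j L => if v = ⟨D.c (j + L)⟩ then segVec k D τ j L else 0) (fun j => ?_) (fun j => ?_)
    (fun j L hL => by simp [segVec_of_two_mul_lt k D τ j hL]) j L
  · simp [segVec, D.c_over]
  · simp [segVec_two_mul, cycleCoeff, D.c_over]

lemma arrowAct_segVec (i j : ZMod (2 * n)) (m : ℕ) :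
    arrowAct k D τ i (segVec k D τ j m) = segMul k D τ i 1 j m := by
  have h2n : 2 * n ≠ 0 := by have := NeZero.ne n; omega
  refine linearCombination_segVec k D τ (segMul k D τ i 1) (fun j => ?_) (fun j => ?_)
    (fun j L hL => ?_) j m
  · simp [segMul, D.c_over]
  · simp [segMul, h2n, segVec_of_two_mul_lt]
  · simp [segMul, show L ≠ 0 by omega, segVec_of_two_mul_lt k D τ j (Nat.lt_succ_of_lt hL)]

lemma arrowAct_segMul (j i : ZMod (2 * n)) {L : ℕ} (hL : 1 ≤ L) (m : ZMod (2 * n)) (l : ℕ) :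
    arrowAct k D τ j (segMul k D τ i L m l) =
      if j = i + L then segMul k D τ i (L + 1) m l else 0 := by
  rcases eq_or_ne l 0 with rfl | hl
  · by_cases hc : D.c m = D.c i
    · simp [segMul, hc, arrowAct_segVec, show L ≠ 0 by omega]
    · simp [segMul, hc]
  · by_cases hi : i = m + l
    · subst hi
      simp [segMul, hl, arrowAct_segVec, add_assoc]
    · simp [segMul, hl, hi]

lemma vertexAct_mul_vertexAct (a b : DiagVertex D) :
    vertexAct k D τ a * vertexAct k D τ b = if a = b then vertexAct k D τ a else 0 := by
  refine ext_segVec k D τ fun j L => ?_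
  simp only [Module.End.mul_apply, vertexAct_segVec]
  split_ifs <;> simp_all [vertexAct_segVec]

lemma sum_vertexAct : ∑ v, vertexAct k D τ v = 1 := by
  refine ext_segVec k D τ fun j L => ?_
  simp [LinearMap.sum_apply, vertexAct_segVec]

lemma arrowAct_mul_vertexAct (i : ZMod (2 * n)) (v : DiagVertex D) :
    arrowAct k D τ i * vertexAct k D τ v = if v = ⟨D.c i⟩ then arrowAct k D τ i else 0 := by
  refine ext_segVec k D τ fun j L => ?_
  have hzero (h : D.c (j + L) ≠ D.c i) : segMul k D τ i 1 j L = 0 := by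
    rcases eq_or_ne L 0 with rfl | hL
    · simp_all [segMul]
    · rw [segMul, if_neg hL, if_neg fun hi => h (by rw [hi])]
  simp only [Module.End.mul_apply, vertexAct_segVec]
  split_ifs with h1 h2 h2
  · rfl
  · rw [arrowAct_segVec, hzero fun h => h2 (h1.trans (congrArg DiagVertex.mk h)),
      LinearMap.zero_apply]
  · rw [map_zero, arrowAct_segVec, hzero fun h => h1 (h2.trans (congrArg DiagVertex.mk h.symm))]
  · simp

lemma vertexAct_mul_arrowAct (i : ZMod (2 * n)) (v : DiagVertex D) :
    vertexAct k D τ v * arrowAct k D τ i =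
      if v = ⟨D.c (i + 1)⟩ then arrowAct k D τ i else 0 := by
  refine ext_segVec k D τ fun j L => ?_
  rw [Module.End.mul_apply, DFunLike.ite_apply, LinearMap.zero_apply, arrowAct_segVec]
  rcases eq_or_ne L 0 with rfl | hL
  · by_cases hc : D.c j = D.c i
    · simp [segMul, hc, vertexAct_segVec]
    · simp [segMul, hc]
  · by_cases hi : i = j + L
    · subst hi
      simp [segMul, hL, vertexAct_segVec, add_assoc]
    · simp [segMul, hL, hi]

lemma arrowAct_mul_arrowAct_of_ne {i j : ZMod (2 * n)} (h : j ≠ i + 1) :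
    arrowAct k D τ j * arrowAct k D τ i = 0 := by
  refine ext_segVec k D τ fun m l => ?_
  rw [Module.End.mul_apply, arrowAct_segVec, arrowAct_segMul k D τ j i le_rfl, Nat.cast_one,
    if_neg h, LinearMap.zero_apply]

noncomputable def genAct :
    DiagVertex D ⊕ QuiverArrow (DiagVertex D) → Module.End k (KnotBasisIdx n →₀ k)
  | .inl v => vertexAct k D τ v
  | .inr f => arrowAct k D τ f.2.2.1

lemma lift_genAct_rel ⦃x y : FreeAlgebra k (DiagVertex D ⊕ QuiverArrow (DiagVertex D))⦄
    (h : PathAlgRel k (DiagVertex D) x y) :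
    FreeAlgebra.lift k (genAct k D τ) x = FreeAlgebra.lift k (genAct k D τ) y := by
  induction h with
  | vertex a b => simpa [genAct, apply_ite] using vertexAct_mul_vertexAct k D τ a b
  | unit => simpa [genAct] using sum_vertexAct k D τ
  | src f v =>
      obtain ⟨⟨a⟩, ⟨b⟩, i, ha, hb⟩ := f
      dsimp only at ha hb
      subst ha hb
      simpa [genAct, apply_ite] using arrowAct_mul_vertexAct k D τ i v
  | tgt f v =>
      obtain ⟨⟨a⟩, ⟨b⟩, i, ha, hb⟩ := f
      dsimp only at ha hb
      subst ha hb
      simpa [genAct, apply_ite] using vertexAct_mul_arrowAct k D τ i v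

noncomputable def pathRep :
    PathAlg k (DiagVertex D) →ₐ[k] Module.End k (KnotBasisIdx n →₀ k) :=
  RingQuot.liftAlgHom k ⟨FreeAlgebra.lift k (genAct k D τ), lift_genAct_rel k D τ⟩

lemma pathRep_vertexElem (v : DiagVertex D) :
    pathRep k D τ (vertexElem k (DiagVertex D) v) = vertexAct k D τ v := by
  simp [pathRep, vertexElem, genAct]

lemma pathRep_arrowGen (i : ZMod (2 * n)) :
    pathRep k D τ (arrowGen k D i) = arrowAct k D τ i := by
  simp [pathRep, arrowGen, arrowElem, genAct]

lemma pathRep_segPath_segVec (i : ZMod (2 * n)) {L : ℕ} (hL : 1 ≤ L) (j : ZMod (2 * n))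
    (m : ℕ) :
    pathRep k D τ (pathElem k (DiagVertex D) (D.segPath i L)) (segVec k D τ j m) =
      segMul k D τ i L j m := by
  induction L, hL using Nat.le_induction with
  | base => rw [D.pathElem_segPath_one, pathRep_arrowGen, arrowAct_segVec]
  | succ L hL ih =>
      rw [D.pathElem_segPath_succ, map_mul, Module.End.mul_apply, ih, pathRep_arrowGen,
        arrowAct_segMul k D τ _ _ hL, if_pos rfl]

lemma pathRep_rel ⦃x y : PathAlg k (DiagVertex D)⦄ (h : KnotRel k D τ x y) :
    pathRep k D τ x = pathRep k D τ y := by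
  induction h with
  | typeI i j _ hne =>
      rw [map_mul, pathRep_arrowGen, pathRep_arrowGen, arrowAct_mul_arrowAct_of_ne k D τ hne,
        map_zero]
  | typeII e =>
      have h2n : 1 ≤ 2 * n := by have := NeZero.ne n; omega
      refine ext_segVec k D τ fun j m => ?_
      rw [map_smul, LinearMap.smul_apply, D.pathElem_gammaMinus, D.pathElem_gammaPlus,
        pathRep_segPath_segVec k D τ _ h2n, pathRep_segPath_segVec k D τ _ h2n]
      rcases eq_or_ne m 0 with rfl | hm
      · simp [segMul, D.c_over, D.c_under, segVec_under_two_mul, smul_ite]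
      · simp [segMul, hm, segVec_of_two_mul_lt k D τ j (show 2 * n < m + 2 * n by omega)]

noncomputable def rep : KnotAlg k D τ →ₐ[k] Module.End k (KnotBasisIdx n →₀ k) :=
  RingQuot.liftAlgHom k ⟨pathRep k D τ, pathRep_rel k D τ⟩

lemma rep_segElem_apply_sum (j : ZMod (2 * n)) (L : ℕ) :
    rep k D τ (segElem k D τ j L) (∑ v : Fin n, Finsupp.single (.inl v) 1) =
      segVec k D τ j L := by
  have hsum : ∑ v : Fin n, Finsupp.single (.inl v) (1 : k) =
      ∑ v, segVec k D τ (D.over' v) 0 := by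
    simp [segVec, D.c_over]
  rw [rep, segElem, RingQuot.liftAlgHom_mkAlgHom_apply, hsum, map_sum]
  rcases eq_or_ne L 0 with rfl | hL
  · simp only [D.pathElem_segPath_zero, pathRep_vertexElem, vertexAct_segVec]
    simp [segVec, D.c_over]
  · simp [pathRep_segPath_segVec k D τ j (Nat.one_le_iff_ne_zero.mpr hL), segMul, D.c_over]

lemma linearIndependent_knotBasisFamily : LinearIndependent k (knotBasisFamily k D τ) := by
  refine LinearIndependent.of_comp ((LinearMap.applyₗ (∑ v : Fin n, Finsupp.single (.inl v) 1))
    ∘ₗ (rep k D τ).toLinearMap) ?_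
  convert Finsupp.linearIndependent_single_one k (KnotBasisIdx n) with b
  rw [Function.comp_apply, knotBasisFamily_eq_segElem, single_eq_segVec k D τ b]
  exact rep_segElem_apply_sum k D τ _ _

end KnotAlg

theorem stmt4 (k : Type) [Field k] [NeZero n] (D : GaussData n) (τ : Fin n → kˣ) :
    FiniteDimensional k (KnotAlg k D τ) ∧
      LinearIndependent k (knotBasisFamily k D τ) ∧
      Submodule.span k (Set.range (knotBasisFamily k D τ)) = ⊤ := by
  have hli := KnotAlg.linearIndependent_knotBasisFamily k D τ
  have hspan := KnotAlg.span_knotBasisFamily_eq_top k D τ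
  exact ⟨Module.Finite.of_basis (Module.Basis.mk hli hspan.ge), hli, hspan⟩
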